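/- arXiv:0801.3022 — 11 statements merged into one kernel-verified Lean document; each statement's English description precedes it below -/
import Mathlib

section
/- Let σ be an involution in S_n with s = s(σ) two-cycles. For 1 ≤ t ≤ n−1, let σ_t be the product of the 2-cycles (j,i) of σ with j ≤ t (and σ_0 = id). Let η = ε_t − ε_i be a positive root with j(η) = t. If σ_{t−1}(η) > 0 (i.e., σ_{t−1}(t) < σ_{t−1}(i)), then σ_k(η) > 0 for all 0 ≤ k ≤ t−1. -/
/-- The partial involution `σ_t`: the product of those 2-cycles of the involution
`σ` whose smaller element (in 1-indexed notation, i.e. index + 1) is at most `t`.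
`sigmaT σ 0 = id` whenever `σ` has no fixed-point-free action outside. -/
def sigmaT {n : ℕ} (σ : Equiv.Perm (Fin n)) (t : ℕ) (x : Fin n) : Fin n :=
  if σ x ≠ x ∧ min (x : ℕ) ((σ x : Fin n) : ℕ) + 1 ≤ t then σ x else x

/-- Lemma 2.1(1): for a positive root `η = ε_t − ε_i` (here with 0-indexed
positions `a < b`, so `t = a + 1`), if `σ_{t−1}(η) > 0` then `σ_k(η) > 0` for all
`0 ≤ k ≤ t − 1`. -/
theorem sigmaT_pos_of_pos_pred (n : ℕ) (σ : Equiv.Perm (Fin n))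
    (hinv : σ * σ = 1) (a b : Fin n) (hab : a < b)
    (h : sigmaT σ (a : ℕ) a < sigmaT σ (a : ℕ) b) :
    ∀ k : ℕ, k ≤ (a : ℕ) → sigmaT σ k a < sigmaT σ k b := by
  intro k hk
  simp only [sigmaT, Fin.lt_def, apply_ite Fin.val, ne_eq, ← Fin.val_ne_iff] at h hab ⊢
  split_ifs at h ⊢ <;> omega
end

section
/- Let σ be an involution in S_n, σ_t the partial involutions as above, and η a positive root with j(η) = t. If σ_t(η) > 0, then σ_{t−1}(η) > 0. -/
/-- Lemma 2.1(2): for a positive root `η = ε_t − ε_i` (0-indexed positions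
`a < b`, `t = a + 1`), if `σ_t(η) > 0` then `σ_{t−1}(η) > 0`. -/
theorem sigmaT_pred_pos_of_pos (n : ℕ) (σ : Equiv.Perm (Fin n))
    (hinv : σ * σ = 1) (a b : Fin n) (hab : a < b)
    (h : sigmaT σ ((a : ℕ) + 1) a < sigmaT σ ((a : ℕ) + 1) b) :
    sigmaT σ (a : ℕ) a < sigmaT σ (a : ℕ) b := by
  have hσσ : ∀ x, σ (σ x) = x := fun x => by
    have := congrArg (fun p : Equiv.Perm (Fin n) => p x) hinv
    simpa [Equiv.Perm.mul_apply] using this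
  have key : ((σ a : Fin n) : ℕ) = (b : ℕ) ↔ ((σ b : Fin n) : ℕ) = (a : ℕ) := by
    constructor
    · intro hh
      have h2 : σ a = b := Fin.ext hh
      rw [← h2, hσσ]
    · intro hh
      have h2 : σ b = a := Fin.ext hh
      rw [← h2, hσσ]
  have hab' : (a : ℕ) < (b : ℕ) := hab
  simp only [sigmaT, ne_eq, Fin.lt_def] at h ⊢
  split_ifs at h ⊢ <;> simp only [Fin.ext_iff, not_and, not_le, not_not] at * <;> omega
end

section
/- Let σ be an involution in S_n with set of transposition roots S = {ξ_1,…,ξ_s}. Define C_+ = {γ ∈ Δ⁺ \ S : σ_{t−1}(γ) > 0 and σ_t(γ) < 0, where t = j(γ)} and C_− = {γ ∈ Δ⁺ : σ_{t−1}(γ) < 0, where t = j(γ)}. Then for every γ' ∈ C_− there is a unique γ ∈ C_+ with γ + γ' ∈ S, and the map γ' ↦ γ is a bijection from C_− to C_+. In particular |C_+| = |C_−|. -/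
/-- The set `S` of transposition roots of `σ`: positive roots `(a, b)` (meaning
`ε_{a+1} − ε_{b+1}` in 1-indexed notation, `a < b`) with `σ a = b`. -/
def SRoots {n : ℕ} (σ : Equiv.Perm (Fin n)) : Set (Fin n × Fin n) :=
  {p | p.1 < p.2 ∧ σ p.1 = p.2}

/-- `C_+`: positive roots `γ ∉ S` with `σ_{t−1}(γ) > 0` and `σ_t(γ) < 0`, where
`t = j(γ)` (1-indexed, i.e. `t = γ.1 + 1`). -/
def Cplus {n : ℕ} (σ : Equiv.Perm (Fin n)) : Set (Fin n × Fin n) :=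
  {p | p.1 < p.2 ∧ σ p.1 ≠ p.2 ∧
    sigmaT σ (p.1 : ℕ) p.1 < sigmaT σ (p.1 : ℕ) p.2 ∧
    sigmaT σ ((p.1 : ℕ) + 1) p.2 < sigmaT σ ((p.1 : ℕ) + 1) p.1}

/-- `C_−`: positive roots `γ` with `σ_{t−1}(γ) < 0`, `t = j(γ)`. -/
def Cminus {n : ℕ} (σ : Equiv.Perm (Fin n)) : Set (Fin n × Fin n) :=
  {p | p.1 < p.2 ∧ sigmaT σ (p.1 : ℕ) p.2 < sigmaT σ (p.1 : ℕ) p.1}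

/-- The sum of roots `γ + γ'` lies in `S`; root addition
`(ε_a − ε_b) + (ε_b − ε_c) = ε_a − ε_c`. -/
def sumInS {n : ℕ} (σ : Equiv.Perm (Fin n)) (γ γ' : Fin n × Fin n) : Prop :=
  (γ.2 = γ'.1 ∧ (γ.1, γ'.2) ∈ SRoots σ) ∨ (γ'.2 = γ.1 ∧ (γ'.1, γ.2) ∈ SRoots σ)

lemma sigmaT_val {n : ℕ} (σ : Equiv.Perm (Fin n)) (t : ℕ) (x : Fin n) :
    ((sigmaT σ t x : Fin n) : ℕ) =
      if min (x : ℕ) ((σ x : Fin n) : ℕ) + 1 ≤ t then ((σ x : Fin n) : ℕ) else (x : ℕ) := by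
  unfold sigmaT
  rcases eq_or_ne (σ x) x with he | he
  · simp [he]
  · simp only [he, ne_eq, not_false_eq_true, true_and]
    split_ifs <;> rfl

lemma cminus_iff {n : ℕ} (σ : Equiv.Perm (Fin n)) (p : Fin n × Fin n) :
    p ∈ Cminus σ ↔ p.1 < p.2 ∧ σ p.2 < p.1 ∧ σ p.2 < σ p.1 := by
  obtain ⟨a, b⟩ := p
  simp only [Cminus, Set.mem_setOf_eq, Fin.lt_def, sigmaT_val]
  constructor
  · rintro ⟨h1, h2⟩
    refine ⟨h1, ?_⟩
    split_ifs at h2 <;> omega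
  · rintro ⟨h1, h2, h3⟩
    refine ⟨h1, ?_⟩
    split_ifs <;> omega
lemma cplus_iff {n : ℕ} (σ : Equiv.Perm (Fin n)) (hσσ : ∀ x, σ (σ x) = x)
    (p : Fin n × Fin n) :
    p ∈ Cplus σ ↔ p.1 < p.2 ∧ p.2 < σ p.1 ∧ p.1 < σ p.2 := by
  obtain ⟨a, b⟩ := p
  have hf : ((σ b : Fin n) : ℕ) = a → ((σ a : Fin n) : ℕ) = b := by
    intro h
    have : σ b = a := Fin.val_injective h
    rw [← this, hσσ]
  have hg : ((σ a : Fin n) : ℕ) = b → ((σ b : Fin n) : ℕ) = a := by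
    intro h
    have : σ a = b := Fin.val_injective h
    rw [← this, hσσ]
  simp only [Cplus, Set.mem_setOf_eq, Fin.lt_def, sigmaT_val, ne_eq, ← Fin.val_eq_val]
  constructor
  · rintro ⟨h1, h2, h3, h4⟩
    refine ⟨h1, ?_⟩
    split_ifs at h3 h4 <;> omega
  · rintro ⟨h1, h2, h3⟩
    refine ⟨h1, ?_, ?_⟩
    · omega
    split_ifs <;> omega

/-- Lemma 2.2: for every `γ' ∈ C_−` there is a unique `γ ∈ C_+` with
`γ + γ' ∈ S`; the correspondence `γ' ↦ γ` is a bijection, so `|C_+| = |C_−|`. -/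
theorem Cminus_Cplus_bijection (n : ℕ) (σ : Equiv.Perm (Fin n))
    (hinv : σ * σ = 1) :
    (∀ γ' ∈ Cminus σ, ∃! γ : Fin n × Fin n, γ ∈ Cplus σ ∧ sumInS σ γ γ') ∧
    (∀ γ ∈ Cplus σ, ∃! γ' : Fin n × Fin n, γ' ∈ Cminus σ ∧ sumInS σ γ γ') ∧
    (Cplus σ).ncard = (Cminus σ).ncard := by
  have hσσ : ∀ x, σ (σ x) = x := by
    intro x
    have := congrArg (fun f => f x) hinv
    simpa using this
  refine ⟨?_, ?_, ?_⟩
  · rintro ⟨a, b⟩ hm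
    rw [cminus_iff] at hm
    obtain ⟨h1, h2, h3⟩ := hm
    refine ⟨(σ b, a), ⟨?_, ?_⟩, ?_⟩
    · rw [cplus_iff σ hσσ]
      exact ⟨h2, by simp [hσσ, h1], h3⟩
    · left
      exact ⟨rfl, lt_trans h2 h1, hσσ b⟩
    · rintro ⟨c, d⟩ ⟨hC, hs⟩
      rw [cplus_iff σ hσσ] at hC
      obtain ⟨hc1, hc2, hc3⟩ := hC
      rcases hs with ⟨hd, hcb, hσc⟩ | ⟨hd, hab, hσa⟩
      · simp only at hd hσc
        have : c = σ b := by rw [← hσc, hσσ]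
        simp [this, hd]
      · -- b = c, σ a = d : impossible
        exfalso
        simp only at hd hσa
        rw [← hd] at hc3
        rw [← hσa, hσσ] at hc3
        exact absurd (lt_trans h1 hc3) (lt_irrefl a)
  · rintro ⟨a, b⟩ hm
    rw [cplus_iff σ hσσ] at hm
    obtain ⟨h1, h2, h3⟩ := hm
    refine ⟨(b, σ a), ⟨?_, ?_⟩, ?_⟩
    · rw [cminus_iff]
      exact ⟨h2, by simp [hσσ, h1], by simpa [hσσ] using h3⟩
    · left
      exact ⟨rfl, lt_trans h1 h2, rfl⟩
    · rintro ⟨c, d⟩ ⟨hC, hs⟩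
      rw [cminus_iff] at hC
      obtain ⟨hc1, hc2, hc3⟩ := hC
      rcases hs with ⟨hd, hcb, hσc⟩ | ⟨hd, hab, hσa⟩
      · simp only at hd hσc
        simp [← hd, ← hσc]
      · -- d = a, σ c = b : impossible
        exfalso
        simp only at hd hσa hab
        have hcb : c = σ b := by rw [← hσa, hσσ]
        rw [hcb, hd] at hc1
        have h3' : a < σ b := h3
        exact absurd (lt_trans h3' hc1) (lt_irrefl a)
  · have himg : Cminus σ = (fun p : Fin n × Fin n => (p.2, σ p.1)) '' Cplus σ := by
      ext ⟨a, b⟩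
      simp only [Set.mem_image, Prod.mk.injEq]
      rw [cminus_iff]
      constructor
      · rintro ⟨h1, h2, h3⟩
        refine ⟨(σ b, a), ?_, rfl, hσσ b⟩
        rw [cplus_iff σ hσσ]
        exact ⟨h2, by simp [hσσ, h1], h3⟩
      · rintro ⟨⟨c, d⟩, hC, hd, hσc⟩
        rw [cplus_iff σ hσσ] at hC
        obtain ⟨hc1, hc2, hc3⟩ := hC
        simp only at hd hσc
        subst hd
        subst hσc
        exact ⟨hc2, by simpa [hσσ] using hc1, by simpa [hσσ] using hc3⟩
    rw [himg, Set.ncard_image_of_injective]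
    intro p q hpq
    simp only [Prod.mk.injEq] at hpq
    obtain ⟨h1, h2⟩ := hpq
    exact Prod.ext (σ.injective h2) h1
end

section
/- Let σ be an involution in S_n and define Π = {η ∈ Δ⁺ : σ_{t−1}(η) > 0 where t = j(η)}. Then the linear span 𝔭_σ of the root vectors {y_η : η ∈ Π} is a Lie subalgebra of the Lie algebra 𝔫 = ut(n,K) of strictly lower triangular matrices; i.e., if γ, γ' ∈ Π and γ + γ' ∈ Δ⁺, then γ + γ' ∈ Π. -/
/-- The set `Π = {η ∈ Δ⁺ : σ_{t−1}(η) > 0, t = j(η)}`, roots written with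
0-indexed positions `(a, b)`, `a < b`, so `t − 1` corresponds to `(a : ℕ)`. -/
def PiSet {n : ℕ} (σ : Equiv.Perm (Fin n)) : Set (Fin n × Fin n) :=
  {p | p.1 < p.2 ∧ sigmaT σ (p.1 : ℕ) p.1 < sigmaT σ (p.1 : ℕ) p.2}

lemma sigmaT_of_le {n : ℕ} (σ : Equiv.Perm (Fin n)) (t : ℕ) (x : Fin n)
    (hx : t ≤ (x : ℕ)) :
    sigmaT σ t x = if ((σ x : Fin n) : ℕ) < t then σ x else x := by
  unfold sigmaT
  by_cases h : ((σ x : Fin n) : ℕ) < t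
  · rw [if_pos h, if_pos]
    refine ⟨fun he => ?_, ?_⟩
    · have : ((σ x : Fin n) : ℕ) = (x : ℕ) := congrArg Fin.val he
      omega
    · omega
  · rw [if_neg h, if_neg]
    rintro ⟨h1, h2⟩
    have : ((σ x : Fin n) : ℕ) ≠ (x : ℕ) := fun he => h1 (Fin.ext he)
    omega

/-- `𝔭_σ = span{y_η : η ∈ Π}` is a Lie subalgebra of `ut(n, K)`: whenever
`γ, γ' ∈ Π` and `γ + γ'` is a (positive) root, then `γ + γ' ∈ Π`.  Root addition
is only possible in the concatenated form `(a,b) + (b,c) = (a,c)`. -/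
theorem PiSet_closed_under_root_addition (n : ℕ) (σ : Equiv.Perm (Fin n))
    (hinv : σ * σ = 1) :
    ∀ γ ∈ PiSet σ, ∀ γ' ∈ PiSet σ, γ.2 = γ'.1 → (γ.1, γ'.2) ∈ PiSet σ := by
  rintro ⟨a, b⟩ ⟨hab, h1⟩ ⟨b', c⟩ ⟨hbc, h2⟩ heq
  obtain rfl : b = b' := heq
  have hab' : (a : ℕ) < b := hab
  have hbc' : (b : ℕ) < c := hbc
  rw [sigmaT_of_le σ _ a le_rfl, sigmaT_of_le σ _ b (le_of_lt hab')] at h1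
  rw [sigmaT_of_le σ _ b le_rfl, sigmaT_of_le σ _ c (le_of_lt hbc')] at h2
  refine ⟨lt_trans hab hbc, ?_⟩
  rw [sigmaT_of_le σ _ a le_rfl, sigmaT_of_le σ _ c (by omega : (a : ℕ) ≤ c)]
  rw [Fin.lt_def] at h1 h2 ⊢
  split_ifs at h1 h2 ⊢ <;> simp_all <;> omega
end

section
/- Let σ be an involution in S_n, S its set of transposition roots, Π = {η ∈ Δ⁺ : σ_{t−1}(η) > 0, t = j(η)}. Then (Π + Π) ∩ S = ∅; i.e., no root of S can be written as a sum γ + γ' with γ, γ' ∈ Π. -/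
/-- `(Π + Π) ∩ S = ∅`: no transposition root of `σ` is a sum of two roots of
`Π`.  A sum of positive roots can only arise as `(a,b) + (b,c) = (a,c)`. -/
theorem PiSet_sum_avoids_SRoots (n : ℕ) (σ : Equiv.Perm (Fin n))
    (hinv : σ * σ = 1) :
    ∀ γ ∈ PiSet σ, ∀ γ' ∈ PiSet σ, γ.2 = γ'.1 → (γ.1, γ'.2) ∉ SRoots σ := by
  rintro ⟨a, b⟩ ⟨hab, hγ⟩ ⟨b', c⟩ ⟨hbc, hγ'⟩ heq ⟨hac, hσa⟩
  simp only at heq hγ hγ' hab hbc hac hσa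
  subst heq
  have hσc : σ c = a := by
    have := congrArg (fun p : Equiv.Perm (Fin n) => p a) hinv
    simp [hσa] at this
    exact this
  -- compute sigmaT σ b c = a
  have h1 : sigmaT σ (b : ℕ) c = a := by
    have hca : σ c ≠ c := by
      rw [hσc]; intro h; exact absurd (h ▸ hac) (lt_irrefl _)
    simp [sigmaT, hca, hσc]
    omega
  rw [h1] at hγ'
  -- case on sigmaT σ b b
  by_cases hbb : σ b ≠ b ∧ min (b : ℕ) ((σ b : Fin n) : ℕ) + 1 ≤ (b : ℕ)
  · have h2 : sigmaT σ (b : ℕ) b = σ b := by simp [sigmaT, hbb]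
    rw [h2] at hγ'
    -- σ b < a, σ b < b
    have hσb_lt : (σ b : ℕ) < (a : ℕ) := hγ'
    have hσbb : (σ b : ℕ) < (b : ℕ) := by omega
    -- now compute γ condition: sigmaT σ a a = a, sigmaT σ a b = σ b
    have h3 : sigmaT σ (a : ℕ) a = a := by
      have : ¬ (σ a ≠ a ∧ min (a : ℕ) ((σ a : Fin n) : ℕ) + 1 ≤ (a : ℕ)) := by
        rintro ⟨-, h⟩; omega
      unfold sigmaT; rw [if_neg this]
    have h4 : sigmaT σ (a : ℕ) b = σ b := by
      have : σ b ≠ b ∧ min (b : ℕ) ((σ b : Fin n) : ℕ) + 1 ≤ (a : ℕ) := by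
        refine ⟨hbb.1, ?_⟩
        have hab' : (a : ℕ) < (b : ℕ) := hab
        omega
      simp [sigmaT, this]
    rw [h3, h4] at hγ
    have : (a : ℕ) < (σ b : ℕ) := hγ
    omega
  · have h2 : sigmaT σ (b : ℕ) b = b := by unfold sigmaT; rw [if_neg hbb]
    rw [h2] at hγ'
    have : (b : ℕ) < (a : ℕ) := hγ'
    have hab' : (a : ℕ) < (b : ℕ) := hab
    omega
end

section
/- Let σ be an involution in S_n, and let X_σ ⊂ 𝔫* consist of linear forms f with f(y_ξ) ≠ 0 for all transposition roots ξ of σ and f(y_γ) = 0 for all other positive roots γ. Then the subalgebra 𝔭_σ spanned by {y_η : η ∈ Π} is isotropic for the form B_f(x,y) = f([x,y]) for every f ∈ X_σ, i.e., f([x,y]) = 0 for all x, y ∈ 𝔭_σ. -/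
lemma pSigma_key {n : ℕ} (σ : Equiv.Perm (Fin n)) (hinv : σ * σ = 1)
    (a b k : Fin n) (hab : a < b) (hσ : σ a = b)
    (h1a : a < k) (h1 : sigmaT σ (a : ℕ) a < sigmaT σ (a : ℕ) k)
    (h2b : k < b) (h2 : sigmaT σ (k : ℕ) k < sigmaT σ (k : ℕ) b) : False := by
  have hab' : (a : ℕ) < b := hab
  have h1a' : (a : ℕ) < k := h1a
  have h2b' : (k : ℕ) < b := h2b
  have hσb : σ b = a := by
    have := congrArg (fun p => p a) hinv
    simpa [hσ, Equiv.Perm.mul_apply] using this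
  have e1 : sigmaT σ (a : ℕ) a = a := by
    unfold sigmaT
    rw [if_neg]
    rintro ⟨-, h'⟩
    rw [hσ] at h'
    omega
  have e2 : sigmaT σ (k : ℕ) b = a := by
    unfold sigmaT
    rw [if_pos]
    · exact hσb
    · refine ⟨?_, ?_⟩
      · rw [hσb]; intro h; exact absurd (Fin.val_eq_of_eq h) (by omega)
      · rw [hσb]; omega
  rw [e2] at h2
  by_cases hc : σ k ≠ k ∧ min (k : ℕ) ((σ k : Fin n) : ℕ) + 1 ≤ (k : ℕ)
  · have e3 : sigmaT σ (k : ℕ) k = σ k := by unfold sigmaT; rw [if_pos hc]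
    rw [e3] at h2
    have hσk : ((σ k : Fin n) : ℕ) < a := h2
    have e4 : sigmaT σ (a : ℕ) k = σ k := by
      unfold sigmaT
      rw [if_pos ⟨hc.1, by omega⟩]
    rw [e1, e4] at h1
    have : (a : ℕ) < σ k := h1
    omega
  · have e3 : sigmaT σ (k : ℕ) k = k := by unfold sigmaT; rw [if_neg hc]
    rw [e3] at h2
    have : (k : ℕ) < a := h2
    omega

/-- `𝔭_σ` is isotropic for `B_f(x,y) = f([x,y])` for every `f ∈ X_σ`.  Here
`𝔫 = ut(n,K)` is realized as strictly lower triangular matrices; the functional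
`f` is given by coefficients `F` via `f(z) = ∑_{i,j} F i j * z i j`; `f ∈ X_σ`
means `F b a ≠ 0` exactly on the transposition roots `(a,b)` of `σ` (among
positions `a < b`); elements of `𝔭_σ` are matrices supported on entries `(i,j)`,
`j < i`, whose root `ε_{j+1} − ε_{i+1}` lies in `Π`. -/
theorem pSigma_isotropic (n : ℕ) (K : Type*) [Field K] [CharZero K]
    (σ : Equiv.Perm (Fin n)) (hinv : σ * σ = 1)
    (F : Fin n → Fin n → K)
    (hF1 : ∀ a b : Fin n, a < b → σ a = b → F b a ≠ 0)
    (hF0 : ∀ a b : Fin n, a < b → σ a ≠ b → F b a = 0)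
    (x y : Matrix (Fin n) (Fin n) K)
    (hx : ∀ i j : Fin n, x i j ≠ 0 →
      j < i ∧ sigmaT σ (j : ℕ) j < sigmaT σ (j : ℕ) i)
    (hy : ∀ i j : Fin n, y i j ≠ 0 →
      j < i ∧ sigmaT σ (j : ℕ) j < sigmaT σ (j : ℕ) i) :
    ∑ i : Fin n, ∑ j : Fin n, F i j * (x * y - y * x) i j = 0 := by
  apply Finset.sum_eq_zero
  intro i _
  apply Finset.sum_eq_zero
  intro j _
  by_cases hji : j < i
  · by_cases hσ : σ j = i
    · have hxy : (x * y) i j = 0 := by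
        rw [Matrix.mul_apply]
        apply Finset.sum_eq_zero
        intro k _
        by_contra h
        have hx' := hx i k (left_ne_zero_of_mul h)
        have hy' := hy k j (right_ne_zero_of_mul h)
        exact pSigma_key σ hinv j i k hji hσ hy'.1 hy'.2 hx'.1 hx'.2
      have hyx : (y * x) i j = 0 := by
        rw [Matrix.mul_apply]
        apply Finset.sum_eq_zero
        intro k _
        by_contra h
        have hy' := hy i k (left_ne_zero_of_mul h)
        have hx' := hx k j (right_ne_zero_of_mul h)
        exact pSigma_key σ hinv j i k hji hσ hx'.1 hx'.2 hy'.1 hy'.2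
      simp [Matrix.sub_apply, hxy, hyx]
    · rw [hF0 j i hji hσ, zero_mul]
  · have hxy : (x * y) i j = 0 := by
      rw [Matrix.mul_apply]
      apply Finset.sum_eq_zero
      intro k _
      by_contra h
      have hx' := hx i k (left_ne_zero_of_mul h)
      have hy' := hy k j (right_ne_zero_of_mul h)
      exact hji (hy'.1.trans hx'.1)
    have hyx : (y * x) i j = 0 := by
      rw [Matrix.mul_apply]
      apply Finset.sum_eq_zero
      intro k _
      by_contra h
      have hy' := hy i k (left_ne_zero_of_mul h)
      have hx' := hx k j (right_ne_zero_of_mul h)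
      exact hji (hx'.1.trans hy'.1)
    simp [Matrix.sub_apply, hxy, hyx]
end

section
/- With notation as before, for every f ∈ X_σ the subspace 𝔭_σ is a maximal isotropic subspace of 𝔫 for the skew form B_f(x,y) = f([x,y]); hence 𝔭_σ is a polarization of f. -/
def strictLower (n : ℕ) (K : Type*) [Field K] :
    Submodule K (Matrix (Fin n) (Fin n) K) where
  carrier := {x | ∀ i j : Fin n, ¬ j < i → x i j = 0}
  add_mem' := by
    intro a b ha hb i j h
    simp [Matrix.add_apply, ha i j h, hb i j h]
  zero_mem' := by intro i j h; simp
  smul_mem' := by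
    intro c a ha i j h
    simp [Matrix.smul_apply, ha i j h]

def pSigma {n : ℕ} (K : Type*) [Field K] (σ : Equiv.Perm (Fin n)) :
    Submodule K (Matrix (Fin n) (Fin n) K) :=
  Submodule.span K {m | ∃ a b : Fin n, a < b ∧
    sigmaT σ (a : ℕ) a < sigmaT σ (a : ℕ) b ∧
    m = Matrix.single b a 1}

lemma sigmaT_cond {n : ℕ} (σ : Equiv.Perm (Fin n)) {a b : Fin n} (hab : a < b) :
    sigmaT σ (a : ℕ) a < sigmaT σ (a : ℕ) b ↔
      ((a : ℕ) ≤ ((σ b : Fin n) : ℕ) ∨ ((σ a : Fin n) : ℕ) < ((σ b : Fin n) : ℕ)) := by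
  have hab' : (a : ℕ) < (b : ℕ) := hab
  have e1 : sigmaT σ (a : ℕ) a = if ((σ a : Fin n) : ℕ) < (a : ℕ) then σ a else a := by
    unfold sigmaT
    refine if_congr ?_ rfl rfl
    rw [Ne, Fin.ext_iff]
    omega
  have e2 : sigmaT σ (a : ℕ) b = if ((σ b : Fin n) : ℕ) < (a : ℕ) then σ b else b := by
    unfold sigmaT
    refine if_congr ?_ rfl rfl
    rw [Ne, Fin.ext_iff]
    omega
  rw [e1, e2]
  split_ifs with h1 h2 h2 <;> rw [Fin.lt_def] <;> omega

lemma sumF_right {n : ℕ} {K : Type*} [Field K] (F : Fin n → Fin n → K)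
    (x : Matrix (Fin n) (Fin n) K) (c d : Fin n) :
    ∑ i : Fin n, ∑ j : Fin n, F i j * (x * Matrix.single d c (1 : K)) i j
      = ∑ i : Fin n, F i c * x i d := by
  refine Finset.sum_congr rfl fun i _ => ?_
  rw [Finset.sum_eq_single c]
  · rw [Matrix.mul_single_apply_same, mul_one]
  · intro j _ hj
    simp [Matrix.mul_single_apply_of_ne, hj]
  · intro h; exact absurd (Finset.mem_univ c) h

lemma sumF_left {n : ℕ} {K : Type*} [Field K] (F : Fin n → Fin n → K)
    (x : Matrix (Fin n) (Fin n) K) (c d : Fin n) :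
    ∑ i : Fin n, ∑ j : Fin n, F i j * (Matrix.single d c (1 : K) * x) i j
      = ∑ j : Fin n, F d j * x c j := by
  rw [Finset.sum_eq_single d]
  · refine Finset.sum_congr rfl fun j _ => ?_
    rw [Matrix.single_mul_apply_same, one_mul]
  · intro i _ hi
    refine Finset.sum_eq_zero fun j _ => ?_
    simp [Matrix.single_mul_apply_of_ne, hi]
  · intro h; exact absurd (Finset.mem_univ d) h

lemma sumF_comm {n : ℕ} {K : Type*} [Field K] (F : Fin n → Fin n → K)
    (x : Matrix (Fin n) (Fin n) K) (c d : Fin n) :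
    ∑ i : Fin n, ∑ j : Fin n,
        F i j * ((x * Matrix.single d c (1 : K) - Matrix.single d c (1 : K) * x) i j)
      = (∑ i : Fin n, F i c * x i d) - ∑ j : Fin n, F d j * x c j := by
  have h : ∀ i j : Fin n,
      F i j * ((x * Matrix.single d c (1 : K) - Matrix.single d c (1 : K) * x) i j)
        = F i j * (x * Matrix.single d c (1 : K)) i j
          - F i j * (Matrix.single d c (1 : K) * x) i j := by
    intro i j
    rw [Matrix.sub_apply]
    ring
  simp only [h, Finset.sum_sub_distrib]
  rw [sumF_right, sumF_left]

lemma mem_pSigma_of_support {n : ℕ} {K : Type*} [Field K] (σ : Equiv.Perm (Fin n))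
    {x : Matrix (Fin n) (Fin n) K}
    (h : ∀ i j : Fin n, x i j ≠ 0 →
      j < i ∧ sigmaT σ (j : ℕ) j < sigmaT σ (j : ℕ) i) : x ∈ pSigma K σ := by
  rw [Matrix.matrix_eq_sum_single x]
  refine Submodule.sum_mem _ fun i _ => Submodule.sum_mem _ fun j _ => ?_
  by_cases hx : x i j = 0
  · rw [hx, Matrix.single_zero]; exact Submodule.zero_mem _
  · have hmem : Matrix.single i j (1 : K) ∈ pSigma K σ :=
      Submodule.subset_span ⟨j, i, (h i j hx).1, (h i j hx).2, rfl⟩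
    have : Matrix.single i j (x i j) = x i j • Matrix.single i j (1 : K) := by
      rw [Matrix.smul_single, smul_eq_mul, mul_one]
    rw [this]
    exact Submodule.smul_mem _ _ hmem

/-- Theorem 1.1: for every `f ∈ X_σ` (given by coefficients `F`), the subspace
`𝔭_σ` is a subalgebra and a maximal isotropic subspace of `𝔫` for
`B_f(x,y) = f([x,y])`; hence `𝔭_σ` is a polarization of `f`. -/
theorem pSigma_polarization (n : ℕ) (K : Type*) [Field K] [CharZero K]
    (σ : Equiv.Perm (Fin n)) (hinv : σ * σ = 1)
    (F : Fin n → Fin n → K)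
    (hF1 : ∀ a b : Fin n, a < b → σ a = b → F b a ≠ 0)
    (hF0 : ∀ a b : Fin n, a < b → σ a ≠ b → F b a = 0) :
    pSigma K σ ≤ strictLower n K ∧
    (∀ x ∈ pSigma K σ, ∀ y ∈ pSigma K σ, x * y - y * x ∈ pSigma K σ) ∧
    (∀ x ∈ pSigma K σ, ∀ y ∈ pSigma K σ,
      ∑ i : Fin n, ∑ j : Fin n, F i j * (x * y - y * x) i j = 0) ∧
    (∀ q : Submodule K (Matrix (Fin n) (Fin n) K),
      q ≤ strictLower n K → pSigma K σ ≤ q →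
      (∀ x ∈ q, ∀ y ∈ q,
        ∑ i : Fin n, ∑ j : Fin n, F i j * (x * y - y * x) i j = 0) →
      q = pSigma K σ) := by
  have hσ : ∀ x : Fin n, σ (σ x) = x := fun x => by
    have h := congrArg (fun τ : Equiv.Perm (Fin n) => τ x) hinv
    simpa using h
  -- Part 1
  have part1 : pSigma K σ ≤ strictLower n K := by
    rw [pSigma, Submodule.span_le]
    rintro m ⟨a, b, hab, hcond, rfl⟩
    intro i j hij
    apply Matrix.single_apply_of_ne
    rintro ⟨rfl, rfl⟩
    exact hij hab
  refine ⟨part1, ?_, ?_, ?_⟩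
  -- Part 2 : subalgebra
  · intro x hx y hy
    refine Submodule.span_induction₂
      (p := fun x y _ _ => x * y - y * x ∈ pSigma K σ) ?_ ?_ ?_ ?_ ?_ ?_ ?_ hx hy
    · rintro _ _ ⟨a, b, hab, hPab, rfl⟩ ⟨c, d, hcd, hPcd, rfl⟩
      rw [sigmaT_cond σ hab] at hPab
      rw [sigmaT_cond σ hcd] at hPcd
      have hab' : (a : ℕ) < b := hab
      have hcd' : (c : ℕ) < d := hcd
      by_cases had : a = d
      · subst had
        have hcb : c < b := lt_trans hcd hab
        rw [Matrix.single_mul_single_same,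
          Matrix.single_mul_single_of_ne (h := ne_of_lt hcb), sub_zero, one_mul]
        refine Submodule.subset_span ⟨c, b, hcb, (sigmaT_cond σ hcb).mpr ?_, rfl⟩
        omega
      · by_cases hcb : c = b
        · subst hcb
          have had' : a < d := lt_trans hab hcd
          rw [Matrix.single_mul_single_of_ne (h := had),
            Matrix.single_mul_single_same, zero_sub, one_mul]
          refine Submodule.neg_mem _
            (Submodule.subset_span ⟨a, d, had', (sigmaT_cond σ had').mpr ?_, rfl⟩)
          omega
        · rw [Matrix.single_mul_single_of_ne (h := had),
            Matrix.single_mul_single_of_ne (h := hcb), sub_zero]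
          exact Submodule.zero_mem _
    · intro y hy
      simp only [zero_mul, mul_zero, sub_zero]
      exact Submodule.zero_mem _
    · intro x hx
      simp only [zero_mul, mul_zero, sub_self, zero_sub, neg_zero]
      exact (by simpa using Submodule.zero_mem (pSigma K σ))
    · intro u v w hu hv hw h1 h2
      have e : (u + v) * w - w * (u + v) = (u * w - w * u) + (v * w - w * v) := by
        noncomm_ring
      rw [e]; exact Submodule.add_mem _ h1 h2
    · intro u v w hu hv hw h1 h2
      have e : u * (v + w) - (v + w) * u = (u * v - v * u) + (u * w - w * u) := by
        noncomm_ring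
      rw [e]; exact Submodule.add_mem _ h1 h2
    · intro r u v hu hv h1
      have e : (r • u) * v - v * (r • u) = r • (u * v - v * u) := by
        rw [smul_sub, Matrix.smul_mul, Matrix.mul_smul]
      rw [e]; exact Submodule.smul_mem _ _ h1
    · intro r u v hu hv h1
      have e : u * (r • v) - (r • v) * u = r • (u * v - v * u) := by
        rw [smul_sub, Matrix.smul_mul, Matrix.mul_smul]
      rw [e]; exact Submodule.smul_mem _ _ h1
  -- Part 3 : isotropic
  · intro x hx y hy
    refine Submodule.span_induction₂
      (p := fun x y _ _ =>
        ∑ i : Fin n, ∑ j : Fin n, F i j * (x * y - y * x) i j = 0) ?_ ?_ ?_ ?_ ?_ ?_ ?_ hx hy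
    · rintro _ _ ⟨a, b, hab, hPab, rfl⟩ ⟨c, d, hcd, hPcd, rfl⟩
      rw [sigmaT_cond σ hab] at hPab
      rw [sigmaT_cond σ hcd] at hPcd
      have hab' : (a : ℕ) < b := hab
      have hcd' : (c : ℕ) < d := hcd
      rw [sumF_comm]
      have e1 : ∑ i : Fin n, F i c * Matrix.single b a (1 : K) i d = 0 := by
        refine Finset.sum_eq_zero fun i _ => ?_
        rcases eq_or_ne b i with rfl | hib
        swap
        · simp [Matrix.single, hib]
        rcases eq_or_ne a d with rfl | hda
        swap
        · simp [Matrix.single, hda]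
        rw [Matrix.single_apply_same, mul_one]
        by_cases hsc : σ c = b
        · exfalso
          have h1 : ((σ b : Fin n) : ℕ) = (c : ℕ) := by rw [← hsc, hσ]
          have h2 : ((σ c : Fin n) : ℕ) = (b : ℕ) := by rw [hsc]
          omega
        · exact hF0 c b (lt_trans hcd hab) hsc
      have e2 : ∑ j : Fin n, F d j * Matrix.single b a (1 : K) c j = 0 := by
        refine Finset.sum_eq_zero fun j _ => ?_
        rcases eq_or_ne a j with rfl | hja
        swap
        · simp [Matrix.single, hja]
        rcases eq_or_ne b c with rfl | hbc
        swap
        · simp [Matrix.single, hbc]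
        rw [Matrix.single_apply_same, mul_one]
        by_cases hsa : σ a = d
        · exfalso
          have h1 : ((σ d : Fin n) : ℕ) = (a : ℕ) := by rw [← hsa, hσ]
          have h2 : ((σ a : Fin n) : ℕ) = (d : ℕ) := by rw [hsa]
          omega
        · exact hF0 a d (lt_trans hab hcd) hsa
      rw [e1, e2, sub_zero]
    · intro y hy
      simp
    · intro x hx
      simp
    · intro u v w hu hv hw h1 h2
      have e : ∀ i j : Fin n, F i j * ((u + v) * w - w * (u + v)) i j
          = F i j * (u * w - w * u) i j + F i j * (v * w - w * v) i j := by
        intro i j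
        have e' : (u + v) * w - w * (u + v) = (u * w - w * u) + (v * w - w * v) := by
          noncomm_ring
        rw [e', Matrix.add_apply, mul_add]
      simp only [e, Finset.sum_add_distrib, h1, h2, add_zero]
    · intro u v w hu hv hw h1 h2
      have e : ∀ i j : Fin n, F i j * (u * (v + w) - (v + w) * u) i j
          = F i j * (u * v - v * u) i j + F i j * (u * w - w * u) i j := by
        intro i j
        have e' : u * (v + w) - (v + w) * u = (u * v - v * u) + (u * w - w * u) := by
          noncomm_ring
        rw [e', Matrix.add_apply, mul_add]
      simp only [e, Finset.sum_add_distrib, h1, h2, add_zero]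
    · intro r u v hu hv h1
      have e : ∀ i j : Fin n, F i j * ((r • u) * v - v * (r • u)) i j
          = r * (F i j * (u * v - v * u) i j) := by
        intro i j
        have e' : (r • u) * v - v * (r • u) = r • (u * v - v * u) := by
          rw [smul_sub, Matrix.smul_mul, Matrix.mul_smul]
        rw [e', Matrix.smul_apply, smul_eq_mul]
        ring
      simp only [e, ← Finset.mul_sum, h1, mul_zero]
    · intro r u v hu hv h1
      have e : ∀ i j : Fin n, F i j * (u * (r • v) - (r • v) * u) i j
          = r * (F i j * (u * v - v * u) i j) := by
        intro i j
        have e' : u * (r • v) - (r • v) * u = r • (u * v - v * u) := by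
          rw [smul_sub, Matrix.smul_mul, Matrix.mul_smul]
        rw [e', Matrix.smul_apply, smul_eq_mul]
        ring
      simp only [e, ← Finset.mul_sum, h1, mul_zero]
  -- Part 4 : maximality
  · intro q hqlow hpq hiso
    refine le_antisymm ?_ hpq
    intro x hx
    have hxlow : ∀ i j : Fin n, ¬ j < i → x i j = 0 := hqlow hx
    refine mem_pSigma_of_support σ fun i j hne => ?_
    by_cases hji : j < i
    · refine ⟨hji, ?_⟩
      by_contra hc
      rw [sigmaT_cond σ hji] at hc
      push_neg at hc
      obtain ⟨h1, h2⟩ := hc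
      -- set a = j, b = i; σ i < j, σ i ≤ σ j; show σ i < σ j
      have hji' : (j : ℕ) < i := hji
      have hne2 : ((σ i : Fin n) : ℕ) ≠ ((σ j : Fin n) : ℕ) := by
        intro h
        have : σ i = σ j := Fin.ext h
        have : i = j := σ.injective this
        omega
      have hlt : ((σ i : Fin n) : ℕ) < ((σ j : Fin n) : ℕ) := by omega
      -- pair (c,d) = (σ i, j) is in Π
      have hcd : σ i < j := by rw [Fin.lt_def]; omega
      have hmem : Matrix.single j (σ i) (1 : K) ∈ pSigma K σ := by
        refine Submodule.subset_span ⟨σ i, j, hcd, (sigmaT_cond σ hcd).mpr ?_, rfl⟩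
        left
        omega
      have hzero := hiso x hx _ (hpq hmem)
      rw [sumF_comm] at hzero
      have e1 : ∑ i' : Fin n, F i' (σ i) * x i' j = F i (σ i) * x i j := by
        rw [Finset.sum_eq_single i]
        · intro i' _ hi'
          by_cases hlt' : ((σ i : Fin n) : ℕ) < (i' : ℕ)
          · have hσne : σ (σ i) ≠ i' := by rw [hσ]; exact fun h => hi' h.symm
            rw [hF0 (σ i) i' hlt' hσne, zero_mul]
          · have : ¬ (j : ℕ) < (i' : ℕ) := by omega
            rw [hxlow i' j (by rw [Fin.lt_def]; omega), mul_zero]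
        · intro h; exact absurd (Finset.mem_univ i) h
      have e2 : ∑ j' : Fin n, F j j' * x (σ i) j' = 0 := by
        refine Finset.sum_eq_zero fun j' _ => ?_
        by_cases hlt' : (j' : ℕ) < ((σ i : Fin n) : ℕ)
        · have hj'j : (j' : ℕ) < (j : ℕ) := by omega
          have hσne : σ j' ≠ j := by
            intro h
            have : j' = σ j := by rw [← h, hσ]
            have : (j' : ℕ) = ((σ j : Fin n) : ℕ) := by rw [this]
            omega
          rw [hF0 j' j (by rw [Fin.lt_def]; omega) hσne, zero_mul]
        · rw [hxlow (σ i) j' (by rw [Fin.lt_def]; omega), mul_zero]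
      rw [e1, e2, sub_zero] at hzero
      have hFne : F i (σ i) ≠ 0 := by
        refine hF1 (σ i) i ?_ (hσ i)
        rw [Fin.lt_def]; omega
      exact hne (by
        rcases mul_eq_zero.mp hzero with h | h
        · exact absurd h hFne
        · exact h)
    · exact absurd (hxlow i j hji) hne
end

section
/- Let σ be an involution in S_n. Define M = {γ ∈ Δ⁺ : σ_t(γ) > 0 where t = j(γ)} and Δ⁺_σ = {ζ ∈ Δ⁺ : σ(ζ) > 0}. For each t, write σ = σ_t σ'_t where σ'_t is the product of the 2-cycles of σ with smaller element > t. Then σ'_t restricts to a bijection from Δ_σ^{(t)} = Δ⁺_σ ∩ {γ : j(γ) = t} onto M^{(t)} = M ∩ {γ : j(γ) = t}. Consequently |M| = |Δ⁺_σ| = |Δ⁺| − l(σ). -/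
/-- The complementary partial involution `σ'_t` (2-cycles of `σ` with 1-indexed
smaller element `> t`), so that `σ = σ_t σ'_t`. -/
def sigmaT' {n : ℕ} (σ : Equiv.Perm (Fin n)) (t : ℕ) (x : Fin n) : Fin n :=
  if σ x ≠ x ∧ t < min (x : ℕ) ((σ x : Fin n) : ℕ) + 1 then σ x else x

lemma sq_apply {n : ℕ} (σ : Equiv.Perm (Fin n)) (hinv : σ * σ = 1) (x : Fin n) :
    σ (σ x) = x := by
  have := congrArg (fun τ : Equiv.Perm (Fin n) => τ x) hinv
  simpa [Equiv.Perm.mul_apply] using this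

lemma sigmaT'_invol {n : ℕ} (σ : Equiv.Perm (Fin n)) (hinv : σ * σ = 1) (t : ℕ) (x : Fin n) :
    sigmaT' σ t (sigmaT' σ t x) = x := by
  have hs := sq_apply σ hinv x
  unfold sigmaT'
  by_cases h : σ x ≠ x ∧ t < min (x : ℕ) ((σ x : Fin n) : ℕ) + 1
  · rw [if_pos h, if_pos]
    · exact hs
    · refine ⟨by rw [hs]; exact fun e => h.1 e.symm, ?_⟩
      rw [hs, Nat.min_comm]; exact h.2
  · rw [if_neg h, if_neg h]

lemma sigmaT_sigmaT' {n : ℕ} (σ : Equiv.Perm (Fin n)) (hinv : σ * σ = 1) (t : ℕ) (x : Fin n) :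
    sigmaT σ t (sigmaT' σ t x) = σ x := by
  have hs := sq_apply σ hinv x
  by_cases h1 : σ x = x
  · simp [sigmaT, sigmaT', h1]
  · by_cases h2 : min (x : ℕ) ((σ x : Fin n) : ℕ) + 1 ≤ t
    · have e1 : sigmaT' σ t x = x := by
        unfold sigmaT'; rw [if_neg]; push_neg; intro _; omega
      rw [e1]; unfold sigmaT; rw [if_pos ⟨h1, h2⟩]
    · have e1 : sigmaT' σ t x = σ x := by
        unfold sigmaT'; rw [if_pos ⟨h1, by omega⟩]
      rw [e1]; unfold sigmaT; rw [if_neg]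
      push_neg; intro _
      rw [hs, Nat.min_comm]; omega

lemma sigma_sigmaT' {n : ℕ} (σ : Equiv.Perm (Fin n)) (hinv : σ * σ = 1) (t : ℕ) (x : Fin n) :
    σ (sigmaT' σ t x) = sigmaT σ t x := by
  have h := sigmaT_sigmaT' σ hinv t (sigmaT' σ t x)
  rw [sigmaT'_invol σ hinv] at h
  exact h.symm

lemma sigmaT'_self {n : ℕ} (σ : Equiv.Perm (Fin n)) (x : Fin n) :
    sigmaT' σ ((x : ℕ) + 1) x = x := by
  unfold sigmaT'
  rw [if_neg]
  push_neg
  intro _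
  omega

lemma sigmaT_self {n : ℕ} (σ : Equiv.Perm (Fin n)) (x : Fin n) :
    sigmaT σ ((x : ℕ) + 1) x = σ x := by
  unfold sigmaT
  by_cases h1 : σ x = x
  · simp [h1]
  · rw [if_pos ⟨h1, by omega⟩]

lemma lt_sigmaT' {n t : ℕ} (σ : Equiv.Perm (Fin n)) {i j : Fin n} (h : i < j)
    (ht : (i : ℕ) < t) : i < sigmaT' σ t j := by
  unfold sigmaT'
  split_ifs with h'
  · have := h'.2
    rw [Fin.lt_def]
    omega
  · exact h

/-- Global bijection `p ↦ (p.1, σ'_{p.1+1} p.2)` from `Δ⁺_σ` onto `M`. -/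
lemma global_bijOn {n : ℕ} (σ : Equiv.Perm (Fin n)) (hinv : σ * σ = 1) :
    Set.BijOn (fun p : Fin n × Fin n => (p.1, sigmaT' σ ((p.1 : ℕ) + 1) p.2))
      {p : Fin n × Fin n | p.1 < p.2 ∧ σ p.1 < σ p.2}
      {p : Fin n × Fin n | p.1 < p.2 ∧
        sigmaT σ ((p.1 : ℕ) + 1) p.1 < sigmaT σ ((p.1 : ℕ) + 1) p.2} := by
  refine ⟨?_, ?_, ?_⟩
  · rintro p ⟨h1, h2⟩
    show p.1 < sigmaT' σ ((p.1 : ℕ) + 1) p.2 ∧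
      sigmaT σ ((p.1 : ℕ) + 1) p.1 < sigmaT σ ((p.1 : ℕ) + 1) (sigmaT' σ ((p.1 : ℕ) + 1) p.2)
    refine ⟨lt_sigmaT' σ h1 (Nat.lt_succ_self _), ?_⟩
    rw [sigmaT_self, sigmaT_sigmaT' σ hinv]
    exact h2
  · rintro p - q - he
    simp only [Prod.mk.injEq] at he
    obtain ⟨h1, h2⟩ := he
    rw [h1] at h2
    have h3 : p.2 = q.2 := by
      have := congrArg (sigmaT' σ ((q.1 : ℕ) + 1)) h2
      rwa [← h1, sigmaT'_invol σ hinv, h1, sigmaT'_invol σ hinv] at this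
    exact Prod.ext h1 h3
  · rintro q ⟨h1, h2⟩
    refine ⟨(q.1, sigmaT' σ ((q.1 : ℕ) + 1) q.2), ?_, ?_⟩
    · show q.1 < sigmaT' σ ((q.1 : ℕ) + 1) q.2 ∧ σ q.1 < σ (sigmaT' σ ((q.1 : ℕ) + 1) q.2)
      refine ⟨lt_sigmaT' σ h1 (Nat.lt_succ_self _), ?_⟩
      rw [sigma_sigmaT' σ hinv]
      rwa [sigmaT_self] at h2
    · show (q.1, sigmaT' σ ((q.1 : ℕ) + 1) (sigmaT' σ ((q.1 : ℕ) + 1) q.2)) = q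
      rw [sigmaT'_invol σ hinv]

/-- Remark 2: `σ'_t` restricts to a bijection from
`Δ_σ^{(t)} = {ζ ∈ Δ⁺ : σ(ζ) > 0, j(ζ) = t}` onto
`M^{(t)} = {γ ∈ Δ⁺ : σ_t(γ) > 0, j(γ) = t}`; consequently
`|M| = |Δ⁺_σ| = |Δ⁺| − l(σ)`.  Roots are written with 0-indexed positions, so
`j(p) = p.1 + 1`. -/
theorem sigmaT'_bijOn_and_card (n t : ℕ) (σ : Equiv.Perm (Fin n))
    (hinv : σ * σ = 1) :
    Set.BijOn (fun p : Fin n × Fin n => (sigmaT' σ t p.1, sigmaT' σ t p.2))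
      {p : Fin n × Fin n | p.1 < p.2 ∧ (p.1 : ℕ) + 1 = t ∧ σ p.1 < σ p.2}
      {p : Fin n × Fin n | p.1 < p.2 ∧ (p.1 : ℕ) + 1 = t ∧
        sigmaT σ t p.1 < sigmaT σ t p.2} ∧
    {p : Fin n × Fin n | p.1 < p.2 ∧
        sigmaT σ ((p.1 : ℕ) + 1) p.1 < sigmaT σ ((p.1 : ℕ) + 1) p.2}.ncard
      = {p : Fin n × Fin n | p.1 < p.2 ∧ σ p.1 < σ p.2}.ncard ∧
    {p : Fin n × Fin n | p.1 < p.2 ∧ σ p.1 < σ p.2}.ncard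
      = {p : Fin n × Fin n | p.1 < p.2}.ncard -
        (Finset.univ.filter fun p : Fin n × Fin n =>
          p.1 < p.2 ∧ σ p.2 < σ p.1).card := by
  refine ⟨?_, ?_, ?_⟩
  · -- the slice bijection
    refine ⟨?_, ?_, ?_⟩
    · rintro p ⟨h1, ht, h2⟩
      have hfix : sigmaT' σ t p.1 = p.1 := by rw [← ht]; exact sigmaT'_self σ p.1
      have hA : sigmaT σ t p.1 = σ p.1 := by rw [← ht]; exact sigmaT_self σ p.1
      show sigmaT' σ t p.1 < sigmaT' σ t p.2 ∧ ((sigmaT' σ t p.1 : Fin n) : ℕ) + 1 = t ∧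
        sigmaT σ t (sigmaT' σ t p.1) < sigmaT σ t (sigmaT' σ t p.2)
      rw [hfix]
      refine ⟨lt_sigmaT' σ h1 (by omega), ht, ?_⟩
      rw [sigmaT_sigmaT' σ hinv, hA]
      exact h2
    · rintro p ⟨h1p, htp, -⟩ q ⟨h1q, htq, -⟩ he
      simp only [Prod.mk.injEq] at he
      obtain ⟨e1, e2⟩ := he
      have hp1 : sigmaT' σ t p.1 = p.1 := by rw [← htp]; exact sigmaT'_self σ p.1
      have hq1 : sigmaT' σ t q.1 = q.1 := by rw [← htq]; exact sigmaT'_self σ q.1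
      have h3 : p.2 = q.2 := by
        have := congrArg (sigmaT' σ t) e2
        rwa [sigmaT'_invol σ hinv, sigmaT'_invol σ hinv] at this
      exact Prod.ext (by rw [← hp1, ← hq1, e1]) h3
    · rintro q ⟨h1, ht, h2⟩
      have hq1 : sigmaT' σ t q.1 = q.1 := by rw [← ht]; exact sigmaT'_self σ q.1
      have hA : sigmaT σ t q.1 = σ q.1 := by rw [← ht]; exact sigmaT_self σ q.1
      refine ⟨(q.1, sigmaT' σ t q.2), ?_, ?_⟩
      · show q.1 < sigmaT' σ t q.2 ∧ ((q.1 : Fin n) : ℕ) + 1 = t ∧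
          σ q.1 < σ (sigmaT' σ t q.2)
        refine ⟨lt_sigmaT' σ h1 (by omega), ht, ?_⟩
        rw [sigma_sigmaT' σ hinv]
        rwa [hA] at h2
      · show (sigmaT' σ t q.1, sigmaT' σ t (sigmaT' σ t q.2)) = q
        rw [hq1, sigmaT'_invol σ hinv]
  · -- |M| = |Δ⁺_σ|
    have hb := global_bijOn σ hinv
    rw [← hb.image_eq, Set.ncard_image_of_injOn hb.injOn]
  · -- |Δ⁺_σ| = |Δ⁺| - l(σ)
    rw [Set.ncard_eq_toFinset_card', Set.ncard_eq_toFinset_card']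
    simp only [Set.toFinset_setOf]
    have key : (Finset.univ.filter fun p : Fin n × Fin n => p.1 < p.2 ∧ σ p.1 < σ p.2).card
        + (Finset.univ.filter fun p : Fin n × Fin n => p.1 < p.2 ∧ σ p.2 < σ p.1).card
        = (Finset.univ.filter fun p : Fin n × Fin n => p.1 < p.2).card := by
      rw [← Finset.card_union_of_disjoint, ← Finset.filter_or]
      · apply Finset.card_bij (fun p _ => p) <;> intro p
        · intro hp
          simp only [Finset.mem_filter, Finset.mem_univ, true_and] at hp ⊢
          tauto
        · intro q h1 h2 e; exact e
        · intro hp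
          simp only [Finset.mem_filter, Finset.mem_univ, true_and] at hp
          refine ⟨p, ?_, rfl⟩
          simp only [Finset.mem_filter, Finset.mem_univ, true_and]
          have hne : σ p.1 ≠ σ p.2 := σ.injective.ne (ne_of_lt hp)
          rcases hne.lt_or_gt with h | h
          · exact Or.inl ⟨hp, h⟩
          · exact Or.inr ⟨hp, h⟩
      · rw [Finset.disjoint_left]
        intro p hp hq
        simp only [Finset.mem_filter] at hp hq
        exact absurd (hp.2.2.trans hq.2.2) (lt_irrefl _)
    omega
end

section
/- Let R be a commutative ring with ideal 𝓘, and suppose D·C = Σ_i A_i B_i in R[τ] is an admissible presentation with the notation above. If all a_{i,0} and a_{i,1} lie in 𝓘, and d_0 is invertible modulo 𝓘, then c_0 and c_1 lie in 𝓘. -/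
open Polynomial Finset

/-- Helper: the coefficient of `p * q` just above the sum of trailing degrees. -/
lemma coeff_mul_trailing_succ {R : Type*} [CommRing R] (p q : Polynomial R) :
    (p * q).coeff (p.natTrailingDegree + q.natTrailingDegree + 1) =
      p.trailingCoeff * q.coeff (q.natTrailingDegree + 1) +
        p.coeff (p.natTrailingDegree + 1) * q.trailingCoeff := by
  set a := p.natTrailingDegree
  set b := q.natTrailingDegree
  rw [coeff_mul]
  have hsub : ({(a, b + 1), (a + 1, b)} : Finset (ℕ × ℕ)) ⊆
      Finset.HasAntidiagonal.antidiagonal (a + b + 1) := by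
    intro x hx
    simp only [Finset.mem_insert, Finset.mem_singleton] at hx
    rcases hx with h | h <;> subst h <;> simp [Finset.HasAntidiagonal.mem_antidiagonal] <;> omega
  rw [← Finset.sum_subset hsub]
  · rw [Finset.sum_insert (by simp), Finset.sum_singleton]
    rfl
  · intro x hx hnx
    simp only [Finset.HasAntidiagonal.mem_antidiagonal] at hx
    simp only [Finset.mem_insert, Finset.mem_singleton] at hnx
    rcases lt_or_ge x.1 a with h | h
    · rw [coeff_eq_zero_of_lt_natTrailingDegree h, zero_mul]
    rcases lt_or_ge x.2 b with h2 | h2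
    · rw [coeff_eq_zero_of_lt_natTrailingDegree h2, mul_zero]
    exfalso
    have : x.1 = a ∧ x.2 = b + 1 ∨ x.1 = a + 1 ∧ x.2 = b := by omega
    rcases this with ⟨h1, h2⟩ | ⟨h1, h2⟩ <;>
      exact hnx (by rcases x with ⟨x1, x2⟩; simp_all)

/-- Remark 8: if `D·C = Σ_i A_i B_i` is an admissible presentation over a
commutative ring `R` with ideal `𝓘`, all `a_{i,0}, a_{i,1}` lie in `𝓘`, and the
lowest coefficient `d_0` of `D` is invertible modulo `𝓘`, then the first two
coefficients `c_0, c_1` of `C` lie in `𝓘`. -/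
theorem admissible_coeffs_in_ideal (R : Type*) [CommRing R] (𝓘 : Ideal R)
    (ι : Type*) [Fintype ι]
    (D C : Polynomial R) (A B : ι → Polynomial R)
    (hD : D ≠ 0) (hC : C ≠ 0)
    (heq : D * C = ∑ i, A i * B i)
    (hadm : ∀ i, A i ≠ 0 → B i ≠ 0 →
      D.natTrailingDegree + C.natTrailingDegree ≤
        (A i).natTrailingDegree + (B i).natTrailingDegree)
    (ha0 : ∀ i, (A i).trailingCoeff ∈ 𝓘)
    (ha1 : ∀ i, (A i).coeff ((A i).natTrailingDegree + 1) ∈ 𝓘)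
    (hd : IsUnit (Ideal.Quotient.mk 𝓘 D.trailingCoeff)) :
    C.trailingCoeff ∈ 𝓘 ∧ C.coeff (C.natTrailingDegree + 1) ∈ 𝓘 := by
  set n := D.natTrailingDegree + C.natTrailingDegree with hn
  -- RHS coefficients at `n` and `n+1` lie in `𝓘`.
  have hR : ∀ k, k ≤ n + 1 → (∑ i, A i * B i).coeff k ∈ 𝓘 := by
    intro k hk
    rw [Polynomial.finset_sum_coeff]
    apply Ideal.sum_mem
    intro i _
    by_cases hA : A i = 0
    · simp [hA]
    by_cases hB : B i = 0
    · simp [hB]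
    have hab := hadm i hA hB
    rw [Polynomial.coeff_mul]
    apply Ideal.sum_mem
    intro x hx
    rw [Finset.HasAntidiagonal.mem_antidiagonal] at hx
    rcases lt_or_ge x.1 (A i).natTrailingDegree with h | h
    · rw [coeff_eq_zero_of_lt_natTrailingDegree h, zero_mul]; exact 𝓘.zero_mem
    rcases lt_or_ge x.2 (B i).natTrailingDegree with h2 | h2
    · rw [coeff_eq_zero_of_lt_natTrailingDegree h2, mul_zero]; exact 𝓘.zero_mem
    have : x.1 = (A i).natTrailingDegree ∨ x.1 = (A i).natTrailingDegree + 1 := by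
      omega
    rcases this with h1 | h1
    · rw [h1]; exact Ideal.mul_mem_right _ _ (ha0 i)
    · rw [h1]; exact Ideal.mul_mem_right _ _ (ha1 i)
  have h0 : D.trailingCoeff * C.trailingCoeff ∈ 𝓘 := by
    have := hR n le_self_add
    rwa [← heq, coeff_mul_natTrailingDegree_add_natTrailingDegree] at this
  have h1 : D.trailingCoeff * C.coeff (C.natTrailingDegree + 1) +
      D.coeff (D.natTrailingDegree + 1) * C.trailingCoeff ∈ 𝓘 := by
    have := hR (n + 1) le_rfl
    rwa [← heq, coeff_mul_trailing_succ] at this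
  set π := Ideal.Quotient.mk 𝓘
  have hc0 : C.trailingCoeff ∈ 𝓘 := by
    rw [← Ideal.Quotient.eq_zero_iff_mem]
    have h0' : π D.trailingCoeff * π C.trailingCoeff = 0 := by
      rw [← map_mul, Ideal.Quotient.eq_zero_iff_mem]; exact h0
    rcases hd with ⟨u, hu⟩
    calc (π C.trailingCoeff : R ⧸ 𝓘)
        = ↑u⁻¹ * (π D.trailingCoeff * π C.trailingCoeff) := by
          rw [← mul_assoc, ← hu, Units.inv_mul, one_mul]
      _ = 0 := by rw [h0', mul_zero]
  refine ⟨hc0, ?_⟩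
  rw [← Ideal.Quotient.eq_zero_iff_mem]
  have hc0' : π C.trailingCoeff = 0 := Ideal.Quotient.eq_zero_iff_mem.mpr hc0
  have h1' : π D.trailingCoeff * π (C.coeff (C.natTrailingDegree + 1)) = 0 := by
    have := Ideal.Quotient.eq_zero_iff_mem.mpr h1
    rw [map_add, map_mul, map_mul, hc0', mul_zero, add_zero] at this
    exact this
  rcases hd with ⟨u, hu⟩
  calc (π (C.coeff (C.natTrailingDegree + 1)) : R ⧸ 𝓘)
      = ↑u⁻¹ * (π D.trailingCoeff * π (C.coeff (C.natTrailingDegree + 1))) := by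
        rw [← mul_assoc, ← hu, Units.inv_mul, one_mul]
    _ = 0 := by rw [h1', mul_zero]
end

section
/- Let I_1, J_1, I, J ⊆ {1,…,n} with J = J_1 ⊔ J_2, I = I_1 ⊔ I_2, |I_1| = |J_1|, |I| = |J|, and let S ⊆ J_2, T ⊆ I_2 with |T| = |S|. Define m = |J_1| + |J| − |I_1 ∩ J_1| − |I ∩ J| and m_T = |J_1 ⊔ S| + |J \ S| − |(I_1 ⊔ T) ∩ (J_1 ⊔ S)| − |(I \ T) ∩ (J \ S)|. Then m_T − m = |T ∩ (J_2 \ S)| + |(I_2 \ T) ∩ S| ≥ 0. -/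
/-- Lemma 3.5 (combinatorial core): with `I = I_1 ⊔ I_2`, `J = J_1 ⊔ J_2`,
`|I| = |J|`, `|I_1| = |J_1|`, `S ⊆ J_2`, `T ⊆ I_2`, `|T| = |S|`, setting
`m = |J_1| + |J| − |I_1 ∩ J_1| − |I ∩ J|` and
`m_T = |J_1⊔S| + |J\S| − |(I_1⊔T) ∩ (J_1⊔S)| − |(I\T) ∩ (J\S)|`, one has
`m ≤ m_T` and `m_T − m = |T ∩ (J_2\S)| + |(I_2\T) ∩ S|`. -/
theorem lower_degree_cardinality_identity (n : ℕ)
    (I1 I2 J1 J2 S T : Finset (Fin n))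
    (hI : Disjoint I1 I2) (hJ : Disjoint J1 J2)
    (hcard : (I1 ∪ I2).card = (J1 ∪ J2).card) (hcard1 : I1.card = J1.card)
    (hS : S ⊆ J2) (hT : T ⊆ I2) (hTS : T.card = S.card) :
    (J1.card + (J1 ∪ J2).card - (I1 ∩ J1).card -
        ((I1 ∪ I2) ∩ (J1 ∪ J2)).card) ≤
      ((J1 ∪ S).card + ((J1 ∪ J2) \ S).card -
        ((I1 ∪ T) ∩ (J1 ∪ S)).card -
        (((I1 ∪ I2) \ T) ∩ ((J1 ∪ J2) \ S)).card) ∧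
    ((J1 ∪ S).card + ((J1 ∪ J2) \ S).card -
        ((I1 ∪ T) ∩ (J1 ∪ S)).card -
        (((I1 ∪ I2) \ T) ∩ ((J1 ∪ J2) \ S)).card) -
      (J1.card + (J1 ∪ J2).card - (I1 ∩ J1).card -
        ((I1 ∪ I2) ∩ (J1 ∪ J2)).card) =
      (T ∩ (J2 \ S)).card + ((I2 \ T) ∩ S).card := by
  classical
  have hcardsum : ∀ s : Finset (Fin n),
      s.card = ∑ x : Fin n, (if x ∈ s then 1 else 0) := by
    intro s
    simp [Finset.sum_ite_mem]
  have key : (J1 ∪ S).card + ((J1 ∪ J2) \ S).card + (I1 ∩ J1).card +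
      ((I1 ∪ I2) ∩ (J1 ∪ J2)).card =
      J1.card + (J1 ∪ J2).card + ((I1 ∪ T) ∩ (J1 ∪ S)).card +
      (((I1 ∪ I2) \ T) ∩ ((J1 ∪ J2) \ S)).card +
      (T ∩ (J2 \ S)).card + ((I2 \ T) ∩ S).card := by
    simp only [hcardsum, ← Finset.sum_add_distrib]
    apply Finset.sum_congr rfl
    clear hcardsum hcard hcard1 hTS
    intro x _
    have h1 : x ∈ I1 → x ∉ I2 := fun h => Finset.disjoint_left.mp hI h
    have h2 : x ∈ J1 → x ∉ J2 := fun h => Finset.disjoint_left.mp hJ h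
    have h3 : x ∈ S → x ∈ J2 := fun h => hS h
    have h4 : x ∈ T → x ∈ I2 := fun h => hT h
    simp only [Finset.mem_union, Finset.mem_inter, Finset.mem_sdiff]
    by_cases hx1 : x ∈ I1 <;> by_cases hx2 : x ∈ I2 <;>
      by_cases hx3 : x ∈ J1 <;> by_cases hx4 : x ∈ J2 <;>
      by_cases hx5 : x ∈ S <;> by_cases hx6 : x ∈ T <;> simp_all
  have b1 : (I1 ∩ J1).card ≤ J1.card := Finset.card_le_card Finset.inter_subset_right
  have b2 : ((I1 ∪ I2) ∩ (J1 ∪ J2)).card ≤ (J1 ∪ J2).card :=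
    Finset.card_le_card Finset.inter_subset_right
  have b3 : ((I1 ∪ T) ∩ (J1 ∪ S)).card ≤ (J1 ∪ S).card :=
    Finset.card_le_card Finset.inter_subset_right
  have b4 : (((I1 ∪ I2) \ T) ∩ ((J1 ∪ J2) \ S)).card ≤ ((J1 ∪ J2) \ S).card :=
    Finset.card_le_card Finset.inter_subset_right
  omega
end

section
/- Define the partial order on increasing n-tuples by (v_1<…<v_n) ≤ (u_1<…<u_n) iff v_i ≤ u_i for all i, and for subsets I, J ⊆ {1,…,n} of equal size write I ≥ J iff ord(I) ≥ ord(J) componentwise. Let σ ∈ S_n be an involution and J ⊆ {1,…,n} satisfy: if j ∈ J, j' < j, and σ(j') > σ(j), then j' ∈ J. Then σ(J) ≥ J in this order. -/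
lemma aux_filter_lt {n m : ℕ} (s : Finset (Fin n)) (h : s.card = m) (k : Fin m) :
    (s.filter (fun x => x < (s.orderIsoOfFin h k : Fin n))).card = k := by
  have : s.filter (fun x => x < (s.orderIsoOfFin h k : Fin n)) =
      (Finset.Iio k).image (fun i => (s.orderIsoOfFin h i : Fin n)) := by
    ext x
    simp only [Finset.mem_filter, Finset.mem_image, Finset.mem_Iio]
    constructor
    · rintro ⟨hx, hlt⟩
      refine ⟨(s.orderIsoOfFin h).symm ⟨x, hx⟩, ?_, by simp⟩
      rw [← (s.orderIsoOfFin h).lt_iff_lt, OrderIso.apply_symm_apply]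
      exact hlt
    · rintro ⟨i, hi, rfl⟩
      exact ⟨(s.orderIsoOfFin h i).2, by exact_mod_cast (s.orderIsoOfFin h).lt_iff_lt.2 hi⟩
  rw [this, Finset.card_image_of_injective _ (fun a b hab => (s.orderIsoOfFin h).injective (Subtype.ext hab)), Fin.card_Iio]

lemma aux_filter_le {n m : ℕ} (s : Finset (Fin n)) (h : s.card = m) (k : Fin m) :
    (s.filter (fun x => x ≤ (s.orderIsoOfFin h k : Fin n))).card = k + 1 := by
  have : s.filter (fun x => x ≤ (s.orderIsoOfFin h k : Fin n)) =
      (Finset.Iic k).image (fun i => (s.orderIsoOfFin h i : Fin n)) := by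
    ext x
    simp only [Finset.mem_filter, Finset.mem_image, Finset.mem_Iic]
    constructor
    · rintro ⟨hx, hle⟩
      refine ⟨(s.orderIsoOfFin h).symm ⟨x, hx⟩, ?_, by simp⟩
      rw [← (s.orderIsoOfFin h).le_iff_le, OrderIso.apply_symm_apply]
      exact hle
    · rintro ⟨i, hi, rfl⟩
      exact ⟨(s.orderIsoOfFin h i).2, by exact_mod_cast (s.orderIsoOfFin h).le_iff_le.2 hi⟩
  rw [this, Finset.card_image_of_injective _ (fun a b hab => (s.orderIsoOfFin h).injective (Subtype.ext hab)), Fin.card_Iic]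

/-- Lemma 3.6 (preliminary remark): if `σ` is an involution and
`J ⊆ {1,…,n}` is closed under the inversion relation of `σ` (if `j ∈ J`,
`j' < j` and `σ(j') > σ(j)` then `j' ∈ J`), then `σ(J) ≥ J` componentwise in
the increasing enumerations. -/
theorem image_ge_of_inversion_closed (n : ℕ) (σ : Equiv.Perm (Fin n))
    (hinv : σ * σ = 1) (J : Finset (Fin n))
    (hJ : ∀ j ∈ J, ∀ j' : Fin n, j' < j → σ j < σ j' → j' ∈ J)
    (hc : (J.image σ).card = J.card) :
    ∀ k : Fin J.card,
      (J.orderIsoOfFin rfl k : Fin n) ≤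
        ((J.image σ).orderIsoOfFin hc k : Fin n) := by
  intro k
  by_contra hlt
  push_neg at hlt
  set a := (J.orderIsoOfFin rfl k : Fin n) with ha
  set b := ((J.image σ).orderIsoOfFin hc k : Fin n) with hb
  have hσσ : ∀ x : Fin n, σ (σ x) = x := fun x => by
    have := congrArg (fun τ => τ x) hinv; simpa using this
  set S := (J.image σ).filter (fun x => x ≤ b) with hS
  set T := J.filter (fun x => x < a) with hT
  have hScard : S.card = k + 1 := aux_filter_le _ hc k
  have hTcard : T.card = k := aux_filter_lt _ rfl k
  -- map F : S → T
  have hle : S.card ≤ T.card := by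
    apply Finset.card_le_card_of_injOn (fun x => if σ x < a then σ x else x)
    · intro x hx
      simp only [hS, Finset.mem_coe, Finset.mem_filter, Finset.mem_image] at hx
      obtain ⟨⟨j, hjJ, rfl⟩, hxb⟩ := hx
      simp only [Finset.mem_coe, hσσ j]
      by_cases hja : j < a
      · simp [hja, hT, Finset.mem_filter, hjJ]
      · push_neg at hja
        simp only [if_neg (not_lt.2 hja), hT, Finset.mem_coe, Finset.mem_filter]
        have hxa : σ j < a := lt_of_le_of_lt hxb hlt
        refine ⟨hJ j hjJ (σ j) (lt_of_lt_of_le hxa hja) ?_, hxa⟩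
        rw [hσσ j]
        exact lt_of_lt_of_le hxa hja
    · intro x hx y hy hxy
      simp only [hS, Finset.mem_coe, Finset.mem_filter, Finset.mem_image] at hx hy
      obtain ⟨⟨jx, hjx, rfl⟩, hxb⟩ := hx
      obtain ⟨⟨jy, hjy, rfl⟩, hyb⟩ := hy
      simp only [hσσ jx, hσσ jy] at hxy
      by_cases h1 : jx < a <;> by_cases h2 : jy < a <;>
        simp only [h1, h2, if_true, if_false] at hxy
      · exact congrArg σ hxy
      · exfalso
        have hjy : jy = σ jx := by rw [hxy, hσσ]
        exact not_lt.2 (le_of_not_gt h2) (hjy ▸ lt_of_le_of_lt hxb hlt)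
      · exfalso
        have hjx : jx = σ jy := by rw [← hxy, hσσ]
        exact not_lt.2 (le_of_not_gt h1) (hjx ▸ lt_of_le_of_lt hyb hlt)
      · exact hxy
  omega
end
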